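/- arXiv:1911.03265 — 4 statements merged into one kernel-verified Lean document; each statement's English description precedes it below -/
import Mathlib

section
/- Assume packet losses are i.i.d. Bernoulli with parameter p. For every natural number i with 0 < i ≤ K, Q(i) = C(N, i) · p^i · (1-p)^{N-i} · Σ_{j=0}^{i-1} C(K, K-j) · p^{K-j} · (1-p)^{j}. -/
/-!
A loss pattern `S` splits into its media part `S ∩ B` and its redundancy part `S \ B`, and the
Bernoulli weight of `S` factors accordingly. For `m > 0`, `U(S) = m` says that exactly `m` media
packets and more than `K - m` redundancy packets are lost; writing the latter count as `K - j`
with `j < m` and counting the subsets with prescribed counts by binomial coefficients gives the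
formula.
-/

/-- The media block `B`: the first `N` of the `N + K` packet indices. -/
def mediaB (N K : ℕ) : Finset (Fin (N + K)) :=
  Finset.univ.filter (fun i => (i : ℕ) < N)

/-- `U(S)`: the number of unrecoverable losses among the media packets when the set
of packets lost in the network is `S`. Erasure coding recovers everything iff at
most `K` packets are lost. -/
def unrec (N K : ℕ) (S : Finset (Fin (N + K))) : ℕ :=
  if K < S.card then (S ∩ mediaB N K).card else 0

/-- `Q m`: the probability (under i.i.d. Bernoulli(p) network losses) that exactly
`m` unrecoverable losses remain in the block. -/
noncomputable def Q (N K : ℕ) (p : ℝ) (m : ℕ) : ℝ :=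
  ∑ S ∈ Finset.univ.filter (fun S : Finset (Fin (N + K)) => unrec N K S = m),
    p ^ S.card * (1 - p) ^ (N + K - S.card)

open Finset

namespace Finset

variable {α M : Type*} [Fintype α] [DecidableEq α] [AddCommMonoid M]

theorem sum_inter_sdiff_eq_sum_powerset_sum_powerset_compl (B : Finset α)
    (f : Finset α → Finset α → M) :
    ∑ S, f (S ∩ B) (S \ B) = ∑ T ∈ B.powerset, ∑ U ∈ Bᶜ.powerset, f T U := by
  rw [← sum_product']
  refine sum_nbij' (fun S => (S ∩ B, S \ B)) (fun x => x.1 ∪ x.2) ?_ ?_ ?_ ?_ fun _ _ => rfl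
  · intro S _
    rw [mem_product, mem_powerset, mem_powerset, subset_compl_iff_disjoint_right]
    exact ⟨inter_subset_right, sdiff_disjoint⟩
  · simp
  · intro S _
    rw [union_comm, sdiff_union_inter]
  · rintro ⟨T, U⟩ h
    rw [mem_product, mem_powerset, mem_powerset, subset_compl_iff_disjoint_right] at h
    obtain ⟨hT, hU⟩ := h
    dsimp only at hT hU ⊢
    rw [Prod.mk.injEq, union_inter_distrib_right, inter_eq_left.2 hT,
      disjoint_iff_inter_eq_empty.1 hU, union_empty,
      union_sdiff_distrib, sdiff_eq_empty_iff_subset.2 hT, empty_union, hU.sdiff_eq_left]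
    exact ⟨rfl, rfl⟩

theorem sum_eq_sum_range_choose_mul_choose (B : Finset α) (g : ℕ → ℕ → M) :
    ∑ S, g #(S ∩ B) #(S \ B) = ∑ b ∈ range (#B + 1), ∑ a ∈ range (#Bᶜ + 1),
      ((#B).choose b * (#Bᶜ).choose a) • g b a := by
  rw [sum_inter_sdiff_eq_sum_powerset_sum_powerset_compl B fun T U => g #T #U,
    sum_powerset_apply_card fun b => ∑ U ∈ Bᶜ.powerset, g b #U]
  refine sum_congr rfl fun b _ => ?_
  rw [sum_powerset_apply_card (g b), smul_sum]
  exact sum_congr rfl fun a _ => (mul_smul _ _ _).symm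

theorem sum_range_ite_lt_add {m K : ℕ} (hm : m ≤ K) (F : ℕ → M) :
    ∑ a ∈ range (K + 1), (if K < m + a then F a else 0) = ∑ j ∈ range m, F (K - j) := by
  rw [← sum_range_reflect, ← sum_filter]
  refine sum_congr ?_ fun j _ => by rw [Nat.add_sub_cancel]
  ext j
  simp only [mem_filter, mem_range]
  omega

end Finset

theorem card_mediaB (N K : ℕ) : #(mediaB N K) = N := by
  rw [mediaB, Fin.card_filter_val_lt]
  omega

theorem card_compl_mediaB (N K : ℕ) : #(mediaB N K)ᶜ = K := by
  rw [card_compl, card_mediaB, Fintype.card_fin, Nat.add_sub_cancel_left]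

theorem unrec_eq_iff_of_pos {N K m : ℕ} (hm : 0 < m) (S : Finset (Fin (N + K))) :
    unrec N K S = m ↔ #(S ∩ mediaB N K) = m ∧ K < #(S ∩ mediaB N K) + #(S \ mediaB N K) := by
  rw [unrec, card_inter_add_card_sdiff]
  split_ifs <;> omega

theorem Q_eq_of_pos (N K : ℕ) (p : ℝ) {m : ℕ} (hm : 0 < m) :
    Q N K p m = N.choose m * (p ^ m * (1 - p) ^ (N - m)) *
      ∑ a ∈ range (K + 1), if K < m + a then K.choose a * (p ^ a * (1 - p) ^ (K - a)) else 0 := by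
  set B := mediaB N K
  let g : ℕ → ℕ → ℝ := fun b a =>
    if b = m ∧ K < b + a then p ^ (b + a) * (1 - p) ^ (N + K - (b + a)) else 0
  have summand (S : Finset (Fin (N + K))) :
      (if unrec N K S = m then p ^ #S * (1 - p) ^ (N + K - #S) else 0) = g #(S ∩ B) #(S \ B) := by
    simp only [g, unrec_eq_iff_of_pos hm]
    rw [← card_inter_add_card_sdiff S B]
  rw [Q, sum_filter, sum_congr rfl fun S _ => summand S, sum_eq_sum_range_choose_mul_choose,
    card_mediaB, card_compl_mediaB, sum_eq_single m]
  · rcases Nat.lt_or_ge N m with hNm | hmN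
    · simp [Nat.choose_eq_zero_of_lt hNm]
    rw [mul_sum]
    refine sum_congr rfl fun a ha => ?_
    have haK : a ≤ K := Nat.lt_succ_iff.1 (mem_range.1 ha)
    simp only [g, true_and, nsmul_eq_mul, mul_ite, mul_zero]
    congr 1
    rw [show N + K - (m + a) = (N - m) + (K - a) by omega]
    push_cast
    ring
  · intro b _ hb
    simp [g, hb]
  · intro hmN
    simp [Nat.choose_eq_zero_of_lt (by simpa using hmN)]

theorem stmt_1_general (N K : ℕ) (p : ℝ)
    (i : ℕ) (hi : 0 < i) (hiK : i ≤ K) :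
    Q N K p i =
      (N.choose i : ℝ) * p ^ i * (1 - p) ^ (N - i) *
        ∑ j ∈ Finset.range i,
          (K.choose (K - j) : ℝ) * p ^ (K - j) * (1 - p) ^ j := by
  rw [Q_eq_of_pos N K p hi, sum_range_ite_lt_add hiK, mul_sum, mul_sum]
  refine sum_congr rfl fun j hj => ?_
  rw [Nat.sub_sub_self (by linarith [mem_range.1 hj] : j ≤ K)]
  ring

theorem stmt_1 (N K : ℕ) (p : ℝ) (hp0 : 0 ≤ p) (hp1 : p ≤ 1)
    (i : ℕ) (hi : 0 < i) (hiK : i ≤ K) :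
    Q N K p i =
      (N.choose i : ℝ) * p ^ i * (1 - p) ^ (N - i) *
        ∑ j ∈ Finset.range i,
          (K.choose (K - j) : ℝ) * p ^ (K - j) * (1 - p) ^ j :=
  stmt_1_general N K p i hi hiK
end

section
/- Assume packet losses are i.i.d. Bernoulli with parameter p. For every natural number i with K < i ≤ N, Q(i) = C(N, i) · p^i · (1-p)^{N-i}. -/
lemma mediaB_card (N K : ℕ) : (mediaB N K).card = N := by
  classical
  have : mediaB N K = Finset.map ⟨Fin.castAdd K, Fin.castAdd_injective N K⟩ Finset.univ := by
    ext x
    simp only [mediaB, Finset.mem_filter, Finset.mem_univ, true_and, Finset.mem_map,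
      Function.Embedding.coeFn_mk]
    constructor
    · intro hx
      refine ⟨⟨x.1, hx⟩, ?_⟩
      ext; simp
    · rintro ⟨j, -, rfl⟩
      exact j.2
  simp [this]

lemma compl_mediaB_card (N K : ℕ) : (mediaB N K)ᶜ.card = K := by
  classical
  have := Finset.card_compl (mediaB N K)
  rw [mediaB_card] at this
  simp only [this, Fintype.card_fin]
  omega

lemma bern_sum (K : ℕ) (p : ℝ) {α : Type*} [DecidableEq α] (A : Finset α) (hA : A.card = K) :
    ∑ R ∈ A.powerset, p ^ R.card * (1 - p) ^ (K - R.card) = 1 := by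
  classical
  rw [Finset.sum_powerset_apply_card (fun m => p ^ m * (1 - p) ^ (K - m)), hA]
  calc ∑ m ∈ Finset.range (K + 1), K.choose m • (p ^ m * (1 - p) ^ (K - m))
      = ∑ m ∈ Finset.range (K + 1), p ^ m * (1 - p) ^ (K - m) * K.choose m := by
        refine Finset.sum_congr rfl fun m _ => ?_
        rw [nsmul_eq_mul]; ring
    _ = (p + (1 - p)) ^ K := (add_pow p (1 - p) K).symm
    _ = 1 := by rw [show p + (1 - p) = 1 by ring, one_pow]

theorem stmt_2 (N K : ℕ) (p : ℝ) (hp0 : 0 ≤ p) (hp1 : p ≤ 1)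
    (i : ℕ) (hKi : K < i) (hiN : i ≤ N) :
    Q N K p i = (N.choose i : ℝ) * p ^ i * (1 - p) ^ (N - i) := by
  classical
  set B := mediaB N K with hB
  -- rewrite the filter condition
  have hfilter : (Finset.univ.filter (fun S : Finset (Fin (N + K)) => unrec N K S = i))
      = Finset.univ.filter (fun S : Finset (Fin (N + K)) => (S ∩ B).card = i) := by
    ext S
    simp only [Finset.mem_filter, Finset.mem_univ, true_and]; unfold unrec
    constructor
    · intro h
      by_cases hc : K < S.card
      · rwa [if_pos hc] at h
      · rw [if_neg hc] at h; omega
    · intro h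
      have hc : K < S.card := lt_of_lt_of_le hKi (h ▸ Finset.card_le_card Finset.inter_subset_left)
      rw [if_pos hc, h]
  rw [Q, hfilter]
  -- bijection with pairs (T, R), T ⊆ B of card i, R ⊆ Bᶜ
  have hbij : ∑ S ∈ Finset.univ.filter (fun S : Finset (Fin (N + K)) => (S ∩ B).card = i),
      p ^ S.card * (1 - p) ^ (N + K - S.card)
      = ∑ P ∈ (B.powersetCard i) ×ˢ Bᶜ.powerset,
        p ^ (P.1 ∪ P.2).card * (1 - p) ^ (N + K - (P.1 ∪ P.2).card) := by
    refine Finset.sum_nbij' (fun S => (S ∩ B, S \ B)) (fun P => P.1 ∪ P.2) ?_ ?_ ?_ ?_ ?_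
    · intro S hS
      simp only [Finset.mem_filter, Finset.mem_univ, true_and] at hS
      refine Finset.mem_product.2 ⟨Finset.mem_powersetCard.2 ⟨Finset.inter_subset_right, hS⟩, ?_⟩
      exact Finset.mem_powerset.2 (fun a ha => Finset.mem_compl.2 fun hb =>
        (Finset.mem_sdiff.1 ha).2 hb)
    · intro P hP
      obtain ⟨hT, hR⟩ := Finset.mem_product.1 hP
      obtain ⟨hTB, hTcard⟩ := Finset.mem_powersetCard.1 hT
      have hRB : P.2 ⊆ Bᶜ := Finset.mem_powerset.1 hR
      simp only [Finset.mem_filter, Finset.mem_univ, true_and]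
      have : (P.1 ∪ P.2) ∩ B = P.1 := by
        ext a
        simp only [Finset.mem_inter, Finset.mem_union]
        constructor
        · rintro ⟨h1 | h2, hb⟩
          · exact h1
          · exact absurd hb (Finset.mem_compl.1 (hRB h2))
        · intro h; exact ⟨Or.inl h, hTB h⟩
      rw [this, hTcard]
    · intro S hS
      ext a
      simp only [Finset.mem_union, Finset.mem_inter, Finset.mem_sdiff]
      tauto
    · intro P hP
      obtain ⟨hT, hR⟩ := Finset.mem_product.1 hP
      obtain ⟨hTB, hTcard⟩ := Finset.mem_powersetCard.1 hT
      have hRB : P.2 ⊆ Bᶜ := Finset.mem_powerset.1 hR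
      have h1 : (P.1 ∪ P.2) ∩ B = P.1 := by
        ext a
        simp only [Finset.mem_inter, Finset.mem_union]
        constructor
        · rintro ⟨h1 | h2, hb⟩
          · exact h1
          · exact absurd hb (Finset.mem_compl.1 (hRB h2))
        · intro h; exact ⟨Or.inl h, hTB h⟩
      have h2 : (P.1 ∪ P.2) \ B = P.2 := by
        ext a
        simp only [Finset.mem_sdiff, Finset.mem_union]
        constructor
        · rintro ⟨h1 | h2, hb⟩
          · exact absurd (hTB h1) hb
          · exact h2
        · intro h; exact ⟨Or.inr h, Finset.mem_compl.1 (hRB h)⟩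
      simp [h1, h2]
    · intro S hS
      have h1 : (S ∩ B) ∪ (S \ B) = S := by
        ext a
        simp only [Finset.mem_union, Finset.mem_inter, Finset.mem_sdiff]
        tauto
      simp only [h1]
  rw [hbij]
-- compute the product sum
  rw [Finset.sum_product]
  have hinner : ∀ T ∈ B.powersetCard i,
      (∑ R ∈ Bᶜ.powerset, p ^ (T ∪ R).card * (1 - p) ^ (N + K - (T ∪ R).card))
      = p ^ i * (1 - p) ^ (N - i) := by
    intro T hT
    obtain ⟨hTB, hTcard⟩ := Finset.mem_powersetCard.1 hT
    rw [show (p : ℝ) ^ i * (1 - p) ^ (N - i)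
        = (p ^ i * (1 - p) ^ (N - i)) * (∑ R ∈ Bᶜ.powerset, p ^ R.card * (1 - p) ^ (K - R.card))
        from by rw [bern_sum K p Bᶜ (compl_mediaB_card N K)]; ring]
    rw [Finset.mul_sum]
    refine Finset.sum_congr rfl fun R hR => ?_
    have hRB : R ⊆ Bᶜ := Finset.mem_powerset.1 hR
    have hdisj : Disjoint T R :=
      Finset.disjoint_left.2 fun a haT haR => (Finset.mem_compl.1 (hRB haR)) (hTB haT)
    have hcard : (T ∪ R).card = i + R.card := by
      rw [Finset.card_union_of_disjoint hdisj, hTcard]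
    have hRK : R.card ≤ K := by
      have := Finset.card_le_card hRB
      rwa [compl_mediaB_card N K] at this
    rw [hcard, show N + K - (i + R.card) = (N - i) + (K - R.card) by omega,
      pow_add, pow_add]
    ring
  rw [Finset.sum_congr rfl hinner, Finset.sum_const, Finset.card_powersetCard,
    mediaB_card, nsmul_eq_mul]
  ring
end

section
/- Let N ≥ 1, j ≥ 1, let a_1, …, a_j be positive natural numbers, and let s, e ∈ {0,1} satisfy s + (a_1 + ⋯ + a_j) + (j−1) + e ≤ N. Then the probability under the post-erasure distribution that a block's loss vector equals (s, a_1, …, a_j, e) is P(s, a_1, …, a_j, e) = multichoose(j + 1 − (1−s) − (1−e), N − (a_1 + ⋯ + a_j) − (j−1) − s − e) · Q(a_1 + ⋯ + a_j) / C(N, a_1 + ⋯ + a_j). -/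
/-- Auxiliary function: `rowLengthsAux l n` computes the lengths of the maximal runs of
`true` in `l`, assuming a run of `true`s of length `n` is currently in progress. -/
def rowLengthsAux : List Bool → ℕ → List ℕ
  | [], 0 => []
  | [], n + 1 => [n + 1]
  | true :: t, n => rowLengthsAux t (n + 1)
  | false :: t, 0 => rowLengthsAux t 0
  | false :: t, n + 1 => (n + 1) :: rowLengthsAux t 0

/-- The lengths, in order, of the maximal runs of consecutive `true` entries (loss rows). -/
def rowLengths (l : List Bool) : List ℕ := rowLengthsAux l 0

/-- The number of loss rows (maximal runs of consecutive `true` entries) of `l`. -/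
def runs (l : List Bool) : ℕ := (rowLengths l).length

/-- The loss vector `(s, (a₁, …, a_j), e)` of a block pattern: `a₁, …, a_j` are the lengths
of the loss rows in order, `s = 0` iff the first packet is lost, `e = 0` iff the last
packet is lost. -/
def lossVector (l : List Bool) : ℕ × List ℕ × ℕ :=
  ((if l.head? = some true then 0 else 1),
    rowLengths l,
    (if l.getLast? = some true then 0 else 1))

/-!
A block pattern whose loss rows have lengths a₁, …, a_j is determined by its j + 1 gaps: the
runs of received packets before the first row, between consecutive rows, and after the last
one. The inner gaps are positive, and the outer ones are positive exactly when s = 1, resp.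
e = 1. So the patterns with loss vector (s, a, e) correspond to the compositions of N − ∑ aᵢ
into s + e + j − 1 positive parts, of which there are
multichoose(s + e + j − 1, N − ∑ aᵢ − (s + e + j − 1)); and each of them has exactly ∑ aᵢ
losses, hence the same probability Q(∑ aᵢ) / C(N, ∑ aᵢ).
-/

open Finset

namespace Finset

theorem card_piAntidiag_nat {ι : Type*} [DecidableEq ι] (F : Finset ι) (n : ℕ) :
    #(piAntidiag F n) = (#F).multichoose n := by
  rw [← card_finsuppAntidiag_nat_eq_multichoose, finsuppAntidiag, card_map, card_attach]

theorem card_filter_piAntidiag_univ_pos_iff {ι : Type*} [Fintype ι] [DecidableEq ι]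
    (F : Finset ι) {M : ℕ} (hF : #F ≤ M) :
    #{G ∈ piAntidiag univ M | ∀ i, 0 < G i ↔ i ∈ F} = (#F).multichoose (M - #F) := by
  set c : ι → ℕ := fun i => if i ∈ F then 1 else 0
  have hc_sum (z : ι → ℕ) : ∑ i, (z i + c i) = ∑ i, z i + #F := by
    rw [sum_add_distrib, sum_boole, filter_mem_eq_inter, univ_inter, Nat.cast_id]
  have hsum_eq {z : ι → ℕ} (hz : ∀ i, z i ≠ 0 → i ∈ F) : ∑ i ∈ F, z i = ∑ i, z i :=
    sum_subset (subset_univ F) fun i _ hi => by_contra fun h => hi (hz i h)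
  have hsub_add {G : ι → ℕ} (hG : ∀ i, 0 < G i ↔ i ∈ F) i : G i - c i + c i = G i := by
    by_cases hi : i ∈ F <;> simp only [c, hi, if_true, if_false]
    · have := (hG i).2 hi
      omega
    · rfl
  rw [← card_piAntidiag_nat]
  refine card_nbij' (fun G i => G i - c i) (fun z i => z i + c i) ?_ ?_ ?_ ?_
  · intro G hG
    simp only [coe_filter, mem_coe, mem_piAntidiag, Set.mem_ofPred_eq, mem_univ] at hG ⊢
    obtain ⟨⟨hG_sum, -⟩, hG_pos⟩ := hG
    have hsupp i : G i - c i ≠ 0 → i ∈ F := fun h => (hG_pos i).1 (by omega)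
    have hshift := hc_sum fun i => G i - c i
    simp only [hsub_add hG_pos] at hshift
    rw [hsum_eq hsupp]
    exact ⟨Nat.eq_sub_of_add_eq (hshift.symm.trans hG_sum), hsupp⟩
  · intro z hz
    simp only [coe_filter, mem_coe, mem_piAntidiag, Set.mem_ofPred_eq, mem_univ] at hz ⊢
    obtain ⟨hz_sum, hz_supp⟩ := hz
    refine ⟨⟨?_, fun _ _ => trivial⟩, fun i => ?_⟩
    · rw [hc_sum, ← hsum_eq hz_supp, hz_sum]
      omega
    · by_cases hi : i ∈ F <;> simp only [c, hi, if_true, if_false, iff_true, iff_false]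
      · omega
      · have := mt (hz_supp i) hi
        omega
  · intro G hG
    simp only [coe_filter, mem_piAntidiag, Set.mem_ofPred_eq, mem_univ] at hG
    exact funext (hsub_add hG.2)
  · intro z _
    simp only [Nat.add_sub_cancel]

end Finset

namespace List

theorem replicate_append_inj {α : Type*} {b : α} {m n : ℕ} {x y : List α}
    (hx : x.head? ≠ some b) (hy : y.head? ≠ some b)
    (h : replicate m b ++ x = replicate n b ++ y) : m = n ∧ x = y := by
  induction m generalizing n with
  | zero => cases n <;> simp_all [replicate_succ]
  | succ m ih =>
    cases n with
    | zero =>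
      rw [replicate_zero, nil_append] at h
      simp [← h, replicate_succ] at hy
    | succ n => simp_all [replicate_succ]

theorem exists_ofFn_eq_iff {α : Type*} {n : ℕ} {l : List α} :
    (∃ f : Fin n → α, ofFn f = l) ↔ l.length = n :=
  ⟨by rintro ⟨f, rfl⟩; simp, by rintro rfl; exact ⟨_, ofFn_getElem⟩⟩

end List

def runsBlock : List (ℕ × ℕ) → List Bool
  | [] => []
  | (r, g) :: t => List.replicate r true ++ List.replicate g false ++ runsBlock t

def ofRuns (g₀ : ℕ) (t : List (ℕ × ℕ)) : List Bool :=
  List.replicate g₀ false ++ runsBlock t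

/-- Every run and every gap except the last one is nonempty. -/
def IsRunList (t : List (ℕ × ℕ)) : Prop :=
  (∀ p ∈ t, 0 < p.1) ∧ t.IsChain fun p _ => 0 < p.2

theorem IsRunList.tail {p : ℕ × ℕ} {t : List (ℕ × ℕ)} (h : IsRunList (p :: t)) :
    IsRunList t :=
  ⟨fun q hq => h.1 q (List.mem_cons_of_mem _ hq), h.2.tail⟩

theorem runsBlock_append (t t' : List (ℕ × ℕ)) :
    runsBlock (t ++ t') = runsBlock t ++ runsBlock t' := by
  induction t with
  | nil => rfl
  | cons p t ih => simp [runsBlock, ih]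

theorem length_ofRuns (g₀ : ℕ) (t : List (ℕ × ℕ)) :
    (ofRuns g₀ t).length = g₀ + (t.map Prod.fst).sum + (t.map Prod.snd).sum := by
  induction t with
  | nil => simp [ofRuns, runsBlock]
  | cons p t ih =>
    simp_all [ofRuns, runsBlock]
    omega

theorem rowLengthsAux_replicate_false_append (g : ℕ) (l : List Bool) :
    rowLengthsAux (List.replicate g false ++ l) 0 = rowLengthsAux l 0 := by
  induction g with
  | zero => rfl
  | succ g ih => rwa [List.replicate_succ, List.cons_append, rowLengthsAux]

theorem rowLengthsAux_replicate_true_append (r : ℕ) (l : List Bool) (n : ℕ) :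
    rowLengthsAux (List.replicate r true ++ l) n = rowLengthsAux l (n + r) := by
  induction r generalizing n with
  | zero => rfl
  | succ r ih =>
    rw [List.replicate_succ, List.cons_append, rowLengthsAux, ih, Nat.add_right_comm,
      Nat.add_assoc]

theorem rowLengthsAux_runsBlock {t : List (ℕ × ℕ)} (ht : IsRunList t) :
    rowLengthsAux (runsBlock t) 0 = t.map Prod.fst := by
  induction t with
  | nil => rfl
  | cons p t ih =>
    obtain ⟨r, g⟩ := p
    obtain ⟨r, rfl⟩ := Nat.exists_eq_add_one.2 (ht.1 _ List.mem_cons_self)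
    rw [runsBlock, List.append_assoc, rowLengthsAux_replicate_true_append, zero_add]
    cases t with
    | nil =>
      cases g with
      | zero => rfl
      | succ g =>
        simpa [runsBlock, rowLengthsAux, List.replicate_succ] using
          rowLengthsAux_replicate_false_append g []
    | cons q t =>
      obtain ⟨g, rfl⟩ := Nat.exists_eq_add_one.2 (List.isChain_cons_cons.1 ht.2).1
      rw [List.replicate_succ, List.cons_append, rowLengthsAux,
        rowLengthsAux_replicate_false_append, ih ht.tail]
      rfl

theorem rowLengths_ofRuns (g₀ : ℕ) {t : List (ℕ × ℕ)} (ht : IsRunList t) :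
    rowLengths (ofRuns g₀ t) = t.map Prod.fst := by
  rw [rowLengths, ofRuns, rowLengthsAux_replicate_false_append, rowLengthsAux_runsBlock ht]

theorem sum_rowLengthsAux (l : List Bool) (n : ℕ) :
    (rowLengthsAux l n).sum = l.count true + n := by
  induction l, n using rowLengthsAux.induct <;> simp_all [rowLengthsAux] <;> omega

theorem sum_rowLengths (l : List Bool) : (rowLengths l).sum = l.count true :=
  sum_rowLengthsAux l 0

theorem head?_ofRuns_eq_some_true {g₀ : ℕ} {t : List (ℕ × ℕ)} (ht : IsRunList t)
    (hne : t ≠ []) : (ofRuns g₀ t).head? = some true ↔ g₀ = 0 := by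
  obtain ⟨⟨r, g⟩, t, rfl⟩ := List.exists_cons_of_ne_nil hne
  obtain ⟨r, rfl⟩ := Nat.exists_eq_add_one.2 (ht.1 _ List.mem_cons_self)
  cases g₀ <;> simp [ofRuns, runsBlock, List.replicate_succ]

theorem getLast?_ofRuns_eq_some_true {g₀ : ℕ} {t : List (ℕ × ℕ)} (ht : IsRunList t)
    (hne : t ≠ []) : (ofRuns g₀ t).getLast? = some true ↔ (t.getLast hne).2 = 0 := by
  obtain ⟨t, ⟨r, g⟩, rfl⟩ := (List.eq_nil_or_concat _).resolve_left hne
  obtain ⟨r, rfl⟩ := Nat.exists_eq_add_one.2 (ht.1 (r, g) (by simp))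
  cases g <;> simp [ofRuns, runsBlock_append, runsBlock, List.getLast?_append,
    List.getLast?_replicate]

theorem lossVector_ofRuns (g₀ : ℕ) {t : List (ℕ × ℕ)} (ht : IsRunList t) (hne : t ≠ []) :
    lossVector (ofRuns g₀ t) =
      (if g₀ = 0 then 0 else 1, t.map Prod.fst, if (t.getLast hne).2 = 0 then 0 else 1) := by
  simp only [lossVector, head?_ofRuns_eq_some_true ht hne, getLast?_ofRuns_eq_some_true ht hne,
    rowLengths_ofRuns g₀ ht]

theorem rowLengths_eq_of_lossVector_eq {l : List Bool} {s e : ℕ} {a : List ℕ}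
    (h : lossVector l = (s, a, e)) : rowLengths l = a :=
  congrArg (fun v => v.2.1) h

theorem head?_runsBlock_ne_some_false {t : List (ℕ × ℕ)} (ht : IsRunList t) :
    (runsBlock t).head? ≠ some false := by
  rcases t with _ | ⟨⟨r, g⟩, t⟩
  · simp [runsBlock]
  · obtain ⟨r, rfl⟩ := Nat.exists_eq_add_one.2 (ht.1 _ List.mem_cons_self)
    simp [runsBlock, List.replicate_succ]

theorem head?_replicate_false_append_runsBlock_ne_some_true {r g : ℕ} {t : List (ℕ × ℕ)}
    (ht : IsRunList ((r, g) :: t)) :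
    (List.replicate g false ++ runsBlock t).head? ≠ some true := by
  rcases t with _ | ⟨q, t⟩
  · cases g <;> simp [runsBlock, List.replicate_succ]
  · obtain ⟨g, rfl⟩ := Nat.exists_eq_add_one.2 (List.isChain_cons_cons.1 ht.2).1
    simp [List.replicate_succ]

theorem eq_of_runsBlock_eq {t t' : List (ℕ × ℕ)} (ht : IsRunList t) (ht' : IsRunList t')
    (h : runsBlock t = runsBlock t') : t = t' := by
  induction t generalizing t' with
  | nil =>
    rcases t' with _ | ⟨⟨r, g⟩, t'⟩
    · rfl
    · obtain ⟨r, rfl⟩ := Nat.exists_eq_add_one.2 (ht'.1 _ List.mem_cons_self)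
      simp [runsBlock, List.replicate_succ] at h
  | cons p t ih =>
    obtain ⟨r, g⟩ := p
    rcases t' with _ | ⟨⟨r', g'⟩, t'⟩
    · obtain ⟨r, rfl⟩ := Nat.exists_eq_add_one.2 (ht.1 _ List.mem_cons_self)
      simp [runsBlock, List.replicate_succ] at h
    · simp only [runsBlock, List.append_assoc] at h
      obtain ⟨rfl, h₁⟩ := List.replicate_append_inj
        (head?_replicate_false_append_runsBlock_ne_some_true ht)
        (head?_replicate_false_append_runsBlock_ne_some_true ht') h
      obtain ⟨rfl, h₂⟩ := List.replicate_append_inj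
        (head?_runsBlock_ne_some_false ht.tail) (head?_runsBlock_ne_some_false ht'.tail) h₁
      rw [ih ht.tail ht'.tail h₂]

theorem ofRuns_inj {g₀ g₀' : ℕ} {t t' : List (ℕ × ℕ)} (ht : IsRunList t) (ht' : IsRunList t') :
    ofRuns g₀ t = ofRuns g₀' t' ↔ g₀ = g₀' ∧ t = t' := by
  refine ⟨fun h => ?_, by rintro ⟨rfl, rfl⟩; rfl⟩
  obtain ⟨rfl, h'⟩ := List.replicate_append_inj
    (head?_runsBlock_ne_some_false ht) (head?_runsBlock_ne_some_false ht') h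
  exact ⟨rfl, eq_of_runsBlock_eq ht ht' h'⟩

theorem exists_ofRuns_eq (l : List Bool) : ∃ g₀ t, IsRunList t ∧ ofRuns g₀ t = l := by
  induction l with
  | nil => exact ⟨0, [], ⟨by simp, .nil⟩, rfl⟩
  | cons b l ih =>
    obtain ⟨g₀, t, ht, rfl⟩ := ih
    cases b with
    | false => exact ⟨g₀ + 1, t, ht, rfl⟩
    | true =>
      rcases t with _ | ⟨⟨r, g⟩, t⟩
      · exact ⟨0, [(1, g₀)], ⟨by simp, .singleton _⟩, by simp [ofRuns, runsBlock]⟩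
      rcases g₀ with _ | g₀
      · refine ⟨0, (r + 1, g) :: t, ⟨?_, ?_⟩, ?_⟩
        · simpa using fun p hp => ht.1 p (List.mem_cons_of_mem _ hp)
        · simpa [List.isChain_cons] using ht.2
        · simp [ofRuns, runsBlock, List.replicate_succ]
      · refine ⟨0, (1, g₀ + 1) :: (r, g) :: t, ⟨?_, ?_⟩, ?_⟩
        · simpa using ht.1
        · exact List.IsChain.cons_cons (Nat.succ_pos _) ht.2
        · simp [ofRuns, runsBlock, List.replicate_succ]

def gapRuns (a : List ℕ) (G : Fin (a.length + 1) → ℕ) : List (ℕ × ℕ) :=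
  List.ofFn fun i : Fin a.length => (a[i], G i.succ)

/-- The pattern `0^(G 0) 1^(a₁) 0^(G 1) ⋯ 1^(a_j) 0^(G j)`, with `true = 1` marking a loss. -/
def gapFill (a : List ℕ) (G : Fin (a.length + 1) → ℕ) : List Bool :=
  ofRuns (G 0) (gapRuns a G)

section gapFill

variable {a : List ℕ} {G : Fin (a.length + 1) → ℕ}

theorem map_fst_gapRuns : (gapRuns a G).map Prod.fst = a := by
  simp [gapRuns, List.map_ofFn, Function.comp_def]

theorem isRunList_gapRuns (ha : ∀ x ∈ a, 0 < x)
    (hG : ∀ i, i ≠ 0 → i ≠ Fin.last _ → 0 < G i) : IsRunList (gapRuns a G) := by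
  refine ⟨fun p hp => ?_, List.isChain_iff_getElem.2 fun i hi => ?_⟩
  · obtain ⟨i, rfl⟩ := List.mem_ofFn.1 hp
    exact ha _ (List.getElem_mem _)
  · simp only [gapRuns, List.length_ofFn, List.getElem_ofFn] at hi ⊢
    exact hG _ (Fin.succ_ne_zero _) (by simp [Fin.ext_iff]; omega)

theorem length_gapFill : (gapFill a G).length = ∑ i, G i + a.sum := by
  rw [gapFill, length_ofRuns, map_fst_gapRuns, Fin.sum_univ_succ]
  simp [gapRuns, List.map_ofFn, Function.comp_def, List.sum_ofFn]
  omega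

theorem lossVector_gapFill (ha : ∀ x ∈ a, 0 < x) (hne : a ≠ [])
    (hG : ∀ i, i ≠ 0 → i ≠ Fin.last _ → 0 < G i) :
    lossVector (gapFill a G) =
      (if G 0 = 0 then 0 else 1, a, if G (Fin.last _) = 0 then 0 else 1) := by
  have hlen : 0 < a.length := List.length_pos_iff.2 hne
  have hne' : gapRuns a G ≠ [] := by simpa [gapRuns] using hlen.ne'
  rw [gapFill, lossVector_ofRuns _ (isRunList_gapRuns ha hG) hne', map_fst_gapRuns]
  have hlast : (⟨a.length - 1, by omega⟩ : Fin a.length).succ = Fin.last _ := by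
    ext
    simp only [Fin.val_succ, Fin.val_last]
    omega
  simp only [gapRuns, List.getLast_ofFn, hlast]

theorem eq_of_gapFill_eq {G' : Fin (a.length + 1) → ℕ} (ha : ∀ x ∈ a, 0 < x)
    (hG : ∀ i, i ≠ 0 → i ≠ Fin.last _ → 0 < G i)
    (hG' : ∀ i, i ≠ 0 → i ≠ Fin.last _ → 0 < G' i)
    (h : gapFill a G = gapFill a G') : G = G' := by
  obtain ⟨h₀, hruns⟩ := (ofRuns_inj (isRunList_gapRuns ha hG) (isRunList_gapRuns ha hG')).1 h
  funext i
  exact Fin.cases h₀ (fun i => congrArg Prod.snd (congrFun (List.ofFn_inj.1 hruns) i)) i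

end gapFill

theorem exists_gapFill_eq_ofRuns (g₀ : ℕ) {t : List (ℕ × ℕ)} (ht : IsRunList t) :
    ∃ G : Fin ((t.map Prod.fst).length + 1) → ℕ,
      (∀ i, i ≠ 0 → i ≠ Fin.last _ → 0 < G i) ∧ gapFill (t.map Prod.fst) G = ofRuns g₀ t := by
  refine ⟨Fin.cons g₀ fun i => (t[i]'(by simpa using i.2)).2, fun i h₀ hlast => ?_, ?_⟩
  · obtain ⟨k, rfl⟩ := Fin.eq_succ_of_ne_zero h₀
    have hk : k.val + 1 < t.length := by
      have := k.2
      simp [Fin.ext_iff] at hlast this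
      omega
    simpa using List.isChain_iff_getElem.1 ht.2 k hk
  · rw [gapFill, Fin.cons_zero]
    congr 1
    apply List.ext_getElem <;> simp [gapRuns]

/-- The gaps that are positive in a pattern with loss vector `(s, a, e)`, `j = a.length`. -/
def gapSupport (j s e : ℕ) : Finset (Fin (j + 1)) :=
  {i | (i = 0 → s = 1) ∧ (i = Fin.last j → e = 1)}

theorem card_gapSupport {j s e : ℕ} (hj : 1 ≤ j) (hs : s ≤ 1) (he : e ≤ 1) :
    #(gapSupport j s e) = s + e + (j - 1) := by
  obtain ⟨m, rfl⟩ := Nat.exists_eq_add_of_le' hj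
  have hm (x : Fin m) : (x : ℕ) ≠ m := x.2.ne
  rw [gapSupport, card_filter, Fin.sum_univ_succ, Fin.sum_univ_castSucc]
  interval_cases s <;> interval_cases e <;> simp [Fin.ext_iff, hm] <;> omega

theorem mem_gapSupport_of_ne {j s e : ℕ} {i : Fin (j + 1)} (h₀ : i ≠ 0) (hₗ : i ≠ Fin.last j) :
    i ∈ gapSupport j s e := by
  simp [gapSupport, h₀, hₗ]

theorem forall_pos_iff_mem_gapSupport {j s e : ℕ} (hj : 1 ≤ j) (hs : s ≤ 1) (he : e ≤ 1)
    {G : Fin (j + 1) → ℕ} (hG : ∀ i, i ≠ 0 → i ≠ Fin.last j → 0 < G i) :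
    (∀ i, 0 < G i ↔ i ∈ gapSupport j s e) ↔
      (if G 0 = 0 then 0 else 1) = s ∧ (if G (Fin.last j) = 0 then 0 else 1) = e := by
  have h0 : (0 : Fin (j + 1)) ≠ Fin.last j := by simp [Fin.ext_iff]; omega
  simp only [gapSupport, mem_filter, mem_univ, true_and]
  constructor
  · intro h
    have h₀ := h 0
    have hₗ := h (Fin.last j)
    simp only [h0, h0.symm, false_implies, forall_const, and_true, true_and] at h₀ hₗ
    constructor <;> split_ifs <;> omega
  · rintro ⟨hs', he'⟩ i
    by_cases hi₀ : i = 0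
    · subst hi₀
      simp only [h0, false_implies, forall_const, and_true]
      split_ifs at hs' <;> omega
    by_cases hiₗ : i = Fin.last j
    · subst hiₗ
      simp only [h0.symm, false_implies, forall_const, true_and]
      split_ifs at he' <;> omega
    simp only [hi₀, hiₗ, false_implies, and_self, iff_true]
    exact hG i hi₀ hiₗ

theorem lossVector_eq_iff_exists_gapFill {a : List ℕ} (ha : ∀ x ∈ a, 0 < x) (hne : a ≠ [])
    {s e : ℕ} (hs : s ≤ 1) (he : e ≤ 1) {l : List Bool} :
    lossVector l = (s, a, e) ↔
      ∃ G, (∀ i, 0 < G i ↔ i ∈ gapSupport a.length s e) ∧ gapFill a G = l := by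
  have hj : 1 ≤ a.length := List.length_pos_iff.2 hne
  constructor
  · intro hl
    obtain ⟨g₀, t, ht, rfl⟩ := exists_ofRuns_eq l
    obtain rfl : t.map Prod.fst = a := by
      rw [← rowLengths_ofRuns g₀ ht, rowLengths_eq_of_lossVector_eq hl]
    obtain ⟨G, hG, hfill⟩ := exists_gapFill_eq_ofRuns g₀ ht
    refine ⟨G, (forall_pos_iff_mem_gapSupport hj hs he hG).2 ?_, hfill⟩
    rw [← hfill, lossVector_gapFill ha hne hG] at hl
    simpa using hl
  · rintro ⟨G, hG, rfl⟩
    have hmid i (h₀ : i ≠ 0) (hₗ : i ≠ Fin.last _) : 0 < G i :=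
      (hG i).2 (mem_gapSupport_of_ne h₀ hₗ)
    obtain ⟨hs', he'⟩ := (forall_pos_iff_mem_gapSupport hj hs he hmid).1 hG
    rw [lossVector_gapFill ha hne hmid, hs', he']

theorem card_filter_lossVector_eq {N : ℕ} {a : List ℕ} (ha : ∀ x ∈ a, 0 < x) (hne : a ≠ [])
    {s e : ℕ} (hs : s ≤ 1) (he : e ≤ 1) (hle : s + a.sum + (a.length - 1) + e ≤ N) :
    #{f : Fin N → Bool | lossVector (List.ofFn f) = (s, a, e)} =
      (s + e + (a.length - 1)).multichoose (N - a.sum - (s + e + (a.length - 1))) := by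
  have hj : 1 ≤ a.length := List.length_pos_iff.2 hne
  set S : Finset (Fin (a.length + 1) → ℕ) :=
    {G ∈ piAntidiag univ (N - a.sum) | ∀ i, 0 < G i ↔ i ∈ gapSupport a.length s e} with hS
  have himage : (univ.filter fun f : Fin N → Bool => lossVector (List.ofFn f) = (s, a, e)).image
      List.ofFn = S.image (gapFill a) := by
    ext l
    have hfil : (∃ f : Fin N → Bool, lossVector (List.ofFn f) = (s, a, e) ∧ List.ofFn f = l) ↔
        lossVector l = (s, a, e) ∧ l.length = N := by
      rw [← List.exists_ofFn_eq_iff]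
      exact ⟨fun ⟨f, hf, hfl⟩ => ⟨hfl ▸ hf, f, hfl⟩, fun ⟨hl, f, hfl⟩ => ⟨f, hfl ▸ hl, hfl⟩⟩
    simp only [mem_image, mem_filter, mem_univ, true_and]
    rw [hfil, lossVector_eq_iff_exists_gapFill ha hne hs he]
    simp only [S, mem_filter, mem_piAntidiag]
    constructor
    · rintro ⟨⟨G, hG, rfl⟩, hlen⟩
      rw [length_gapFill] at hlen
      exact ⟨G, ⟨⟨Nat.eq_sub_of_add_eq hlen, fun _ _ => mem_univ _⟩, hG⟩, rfl⟩
    · rintro ⟨G, ⟨⟨hsum, -⟩, hG⟩, rfl⟩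
      refine ⟨⟨G, hG, rfl⟩, ?_⟩
      rw [length_gapFill, show ∑ i, G i = N - a.sum from hsum]
      omega
  have hinj : Set.InjOn (gapFill a) S := fun G hG G' hG' h => by
    simp only [coe_filter, S, Set.mem_ofPred_eq] at hG hG'
    exact eq_of_gapFill_eq ha (fun i h₀ hₗ => (hG.2 i).2 (mem_gapSupport_of_ne h₀ hₗ))
      (fun i h₀ hₗ => (hG'.2 i).2 (mem_gapSupport_of_ne h₀ hₗ)) h
  rw [← card_image_of_injective _ List.ofFn_injective, himage, card_image_of_injOn hinj, hS,
    ← card_gapSupport hj hs he]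
  -- `convert` absorbs the mismatch between the `Fintype` and the `Fin` instances deciding `∀ i`.
  convert card_filter_piAntidiag_univ_pos_iff (gapSupport a.length s e) (M := N - a.sum)
    (by rw [card_gapSupport hj hs he]; omega)

theorem stmt_6_general (N K : ℕ) (p : ℝ)
    (j : ℕ) (hj : 1 ≤ j)
    (a : List ℕ) (hlen : a.length = j) (hpos : ∀ x ∈ a, 0 < x)
    (s e : ℕ) (hs : s ≤ 1) (he : e ≤ 1)
    (hle : s + a.sum + (j - 1) + e ≤ N) :
    ∑ f ∈ Finset.univ.filter (fun f : Fin N → Bool => lossVector (List.ofFn f) = (s, a, e)),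
      Q N K p ((List.ofFn f).count true) / ((N.choose ((List.ofFn f).count true)) : ℝ)
    = (Nat.multichoose (j + 1 - (1 - s) - (1 - e)) (N - a.sum - (j - 1) - s - e) : ℝ) *
        Q N K p a.sum / ((N.choose a.sum) : ℝ) := by
  subst hlen
  have hne : a ≠ [] := List.ne_nil_of_length_pos hj
  have hcount : ∀ f ∈ univ.filter fun f : Fin N → Bool => lossVector (List.ofFn f) = (s, a, e),
      (List.ofFn f).count true = a.sum := fun f hf => by
    rw [← sum_rowLengths, rowLengths_eq_of_lossVector_eq (mem_filter.1 hf).2]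
  rw [sum_congr rfl fun f hf => by rw [hcount f hf], sum_const,
    card_filter_lossVector_eq hpos hne hs he hle, nsmul_eq_mul, mul_div_assoc]
  congr 3 <;> omega

theorem stmt_6 (N K : ℕ) (p : ℝ) (hp0 : 0 ≤ p) (hp1 : p ≤ 1)
    (j : ℕ) (hN : 1 ≤ N) (hj : 1 ≤ j)
    (a : List ℕ) (hlen : a.length = j) (hpos : ∀ x ∈ a, 0 < x)
    (s e : ℕ) (hs : s ≤ 1) (he : e ≤ 1)
    (hle : s + a.sum + (j - 1) + e ≤ N) :
    ∑ f ∈ Finset.univ.filter (fun f : Fin N → Bool => lossVector (List.ofFn f) = (s, a, e)),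
      Q N K p ((List.ofFn f).count true) / ((N.choose ((List.ofFn f).count true)) : ℝ)
    = (Nat.multichoose (j + 1 - (1 - s) - (1 - e)) (N - a.sum - (j - 1) - s - e) : ℝ) *
        Q N K p a.sum / ((N.choose a.sum) : ℝ) :=
  stmt_6_general N K p j hj a hlen hpos s e hs he hle
end

section
/- Let i ≥ 1 and let l_1, …, l_i be nonempty lists of Booleans. Then the number of loss rows of the concatenation satisfies runs(l_1 ++ l_2 ++ ⋯ ++ l_i) = Σ_{k=1}^{i} runs(l_k) − Σ_{k=1}^{i−1} [last entry of l_k is true AND first entry of l_{k+1} is true], where the bracket is 1 if the condition holds and 0 otherwise. -/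
theorem runs_nil : runs [] = 0 := rfl

theorem length_rowLengthsAux (l : List Bool) (n : ℕ) :
    (rowLengthsAux l n).length = runs l + if 0 < n ∧ l.head? ≠ some true then 1 else 0 := by
  induction l generalizing n with
  | nil => cases n <;> rfl
  | cons x t ih =>
    cases x
    · cases n <;> simp [rowLengthsAux, runs, rowLengths]
    · change (rowLengthsAux t (n + 1)).length = (rowLengthsAux t 1).length + _
      simp [ih]

theorem runs_cons (x : Bool) (t : List Bool) :
    runs (x :: t) = runs t + if x = true ∧ t.head? ≠ some true then 1 else 0 := by
  cases x
  · simp [runs, rowLengths, rowLengthsAux]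
  · change (rowLengthsAux t 1).length = _
    rw [length_rowLengthsAux]
    simp

theorem runs_append (a b : List Bool) :
    runs (a ++ b) + (if a.getLast? = some true ∧ b.head? = some true then 1 else 0) =
      runs a + runs b := by
  induction a with
  | nil => simp [runs_nil]
  | cons x a ih =>
    rcases a with _ | ⟨y, a⟩
    · rw [List.singleton_append, runs_cons, runs_cons]
      by_cases b.head? = some true <;> cases x <;> simp_all [runs_nil] <;> omega
    · rw [List.cons_append, runs_cons, runs_cons x, List.getLast?_cons_cons]
      rw [List.cons_append, List.head?_cons, List.head?_cons] at *
      omega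

theorem runs_flatten (L : List (List Bool)) (hne : ∀ l ∈ L, l ≠ []) :
    (runs L.flatten : ℤ) =
      (∑ k ∈ Finset.range L.length, (runs (L.getD k []) : ℤ)) -
        ∑ k ∈ Finset.range (L.length - 1),
          (if (L.getD k []).getLast? = some true ∧ (L.getD (k + 1) []).head? = some true
            then (1 : ℤ) else 0) := by
  induction L with
  | nil => rfl
  | cons a L ih =>
    rcases L with _ | ⟨b, M⟩
    · simp
    · have hb : b ≠ [] := hne b (by simp)
      have hhead : (b :: M).flatten.head? = b.head? := List.head?_append_of_ne_nil b hb
      have hjoin : (runs (a ++ (b :: M).flatten) : ℤ) = runs a + runs (b :: M).flatten -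
          if a.getLast? = some true ∧ b.head? = some true then 1 else 0 := by
        rw [eq_sub_iff_add_eq, ← hhead]
        exact_mod_cast runs_append a (b :: M).flatten
      rw [List.flatten_cons, hjoin, ih fun l hl => hne l (List.mem_cons_of_mem a hl)]
      simp only [List.length_cons, Nat.add_sub_cancel]
      conv_rhs => rw [Finset.sum_range_succ' _ M.length, Finset.sum_range_succ' _ (M.length + 1)]
      simp only [List.getD_cons_succ, List.getD_cons_zero]
      ring

theorem stmt_10_general (i : ℕ) (L : List (List Bool)) (hlen : L.length = i)
    (hne : ∀ l ∈ L, l ≠ []) :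
    (runs L.flatten : ℤ) =
      (∑ k ∈ Finset.range i, (runs (L.getD k []) : ℤ)) -
        ∑ k ∈ Finset.range (i - 1),
          (if (L.getD k []).getLast? = some true ∧ (L.getD (k + 1) []).head? = some true
            then (1 : ℤ) else 0) := by
  subst hlen
  exact runs_flatten L hne

theorem stmt_10 (i : ℕ) (hi : 1 ≤ i) (L : List (List Bool)) (hlen : L.length = i)
    (hne : ∀ l ∈ L, l ≠ []) :
    (runs L.flatten : ℤ) =
      (∑ k ∈ Finset.range i, (runs (L.getD k []) : ℤ)) -
        ∑ k ∈ Finset.range (i - 1),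
          (if (L.getD k []).getLast? = some true ∧ (L.getD (k + 1) []).head? = some true
            then (1 : ℤ) else 0) :=
  stmt_10_general i L hlen hne
end
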